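/- Let R(t) and R_d(t) be smooth curves in SO(3) satisfying Ṙ = RΩ̂ and Ṙ_d = R_dΩ̂_d for curves Ω, Ω_d : ℝ → ℝ³. Define Ψ(t) = (1/2)·tr(I − R_d(t)ᵀR(t)), e_R(t) = ((1/2)(R_dᵀR − RᵀR_d))ᵛ, and e_Ω(t) = Ω − RᵀR_dΩ_d. Then dΨ/dt = e_R · e_Ω. -/

import Mathlib

open Matrix
noncomputable section

/-- `SO3 R` : `R` is a rotation matrix. -/
def SO3 (R : Matrix (Fin 3) (Fin 3) ℝ) : Prop := Rᵀ * R = 1 ∧ R.det = 1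

/-- Attitude error function `Ψ(R,R_d) = ½ tr(I − R_dᵀ R)`. -/
def Psi (R Rd : Matrix (Fin 3) (Fin 3) ℝ) : ℝ := (1/2) * (1 - Rdᵀ * R).trace

/-- The hat map identifying `ℝ³` with skew-symmetric matrices. -/
def hat (x : Fin 3 → ℝ) : Matrix (Fin 3) (Fin 3) ℝ :=
  !![0, -x 2, x 1; x 2, 0, -x 0; -x 1, x 0, 0]

/-- The vee map, inverse of the hat map on skew-symmetric matrices. -/
def vee (A : Matrix (Fin 3) (Fin 3) ℝ) : Fin 3 → ℝ := ![A 2 1, A 0 2, A 1 0]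

/-- Attitude error vector `e_R = (½ (R_dᵀ R − Rᵀ R_d))ᵛ`. -/
def eR (R Rd : Matrix (Fin 3) (Fin 3) ℝ) : Fin 3 → ℝ :=
  vee ((1/2 : ℝ) • (Rdᵀ * R - Rᵀ * Rd))

/-- Euclidean dot product on `ℝ³`. -/
def dot (x y : Fin 3 → ℝ) : ℝ := ∑ i, x i * y i

/-- Euclidean norm on `ℝ³`. -/
def enorm (x : Fin 3 → ℝ) : ℝ := Real.sqrt (dot x x)

/-- Cross product on `ℝ³`. -/
def cross (x y : Fin 3 → ℝ) : Fin 3 → ℝ :=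
  ![x 1 * y 2 - x 2 * y 1, x 2 * y 0 - x 0 * y 2, x 0 * y 1 - x 1 * y 0]

/-! With `Q = R_dᵀ R` we have `Ψ = ½ tr (I - Q)` and `Q̇ = Q Ω̂ - Ω̂_d Q`. The identity
`tr (A x̂) = -(A - Aᵀ)ᵛ · x` turns `-½ tr Q̇` into `e_R · Ω - e_R · Ω_d`, and
`e_R · Ω_d = e_R · Qᵀ Ω_d` because a rotation fixes its own axis: `Q e_R = e_R`. -/

theorem hat_transpose (x : Fin 3 → ℝ) : (hat x)ᵀ = -hat x := by
  ext i j; fin_cases i <;> fin_cases j <;> simp [hat]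

theorem trace_mul_hat (A : Matrix (Fin 3) (Fin 3) ℝ) (x : Fin 3 → ℝ) :
    (A * hat x).trace = -(vee (A - Aᵀ) ⬝ᵥ x) := by
  simp only [trace, diag_apply, mul_apply, Fin.sum_univ_three, hat, vee, dotProduct,
    Matrix.sub_apply, transpose_apply, of_apply, cons_val', cons_val_fin_one, cons_val_zero,
    cons_val_one, cons_val]
  ring

theorem dot_eq_dotProduct (x y : Fin 3 → ℝ) : dot x y = x ⬝ᵥ y := rfl

theorem vee_smul (c : ℝ) (A : Matrix (Fin 3) (Fin 3) ℝ) : vee (c • A) = c • vee A := by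
  ext i; fin_cases i <;> simp [vee]

theorem eR_eq_smul_vee (R Rd : Matrix (Fin 3) (Fin 3) ℝ) :
    eR R Rd = (1/2 : ℝ) • vee (Rdᵀ * R - (Rdᵀ * R)ᵀ) := by
  rw [eR, vee_smul, transpose_mul, transpose_transpose]

namespace SO3

variable {Q P : Matrix (Fin 3) (Fin 3) ℝ}

theorem transpose_mul (hQ : SO3 Q) (hP : SO3 P) : SO3 (Qᵀ * P) := by
  refine ⟨?_, by rw [det_mul, det_transpose, hQ.2, hP.2, mul_one]⟩
  rw [Matrix.transpose_mul, transpose_transpose, Matrix.mul_assoc, ← Matrix.mul_assoc Q,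
    mul_eq_one_comm.mp hQ.1, Matrix.one_mul, hP.1]

theorem adjugate_eq_transpose (hQ : SO3 Q) : Q.adjugate = Qᵀ := by
  rw [← inv_eq_left_inv hQ.1, inv_def, hQ.2, Ring.inverse_one, one_smul]

theorem mulVec_vee_sub_transpose (hQ : SO3 Q) : Q *ᵥ vee (Q - Qᵀ) = vee (Q - Qᵀ) := by
  have cof : ∀ i j, Q.adjugate i j = Q j i := fun i j => by
    rw [hQ.adjugate_eq_transpose, transpose_apply]
  ext i
  fin_cases i <;>
    simp only [mulVec, dotProduct, Fin.zero_eta, Fin.mk_one, Fin.reduceFinMk, vee,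
      Matrix.sub_apply, transpose_apply, Fin.sum_univ_three, cons_val_zero, cons_val_one, cons_val]
  · linear_combination (norm := (simp [adjugate_fin_three]; ring)) cof 1 2 - cof 2 1
  · linear_combination (norm := (simp [adjugate_fin_three]; ring)) cof 2 0 - cof 0 2
  · linear_combination (norm := (simp [adjugate_fin_three]; ring)) cof 0 1 - cof 1 0

end SO3

theorem hasDerivAt_trace_transpose_mul {n : Type*} [Fintype n] {A B : ℝ → Matrix n n ℝ}
    {A' B' : Matrix n n ℝ} {t : ℝ} (hA : ∀ i j, HasDerivAt (fun τ => A τ i j) (A' i j) t)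
    (hB : ∀ i j, HasDerivAt (fun τ => B τ i j) (B' i j) t) :
    HasDerivAt (fun τ => ((A τ)ᵀ * B τ).trace) ((A'ᵀ * B t + (A t)ᵀ * B').trace) t := by
  simp only [trace, diag, Matrix.add_apply, mul_apply, transpose_apply, ← Finset.sum_add_distrib]
  exact HasDerivAt.fun_sum fun i _ => HasDerivAt.fun_sum fun j _ => (hA j i).mul (hB j i)

theorem hasDerivAt_Psi {R Rd : ℝ → Matrix (Fin 3) (Fin 3) ℝ} {R' Rd' : Matrix (Fin 3) (Fin 3) ℝ}
    {t : ℝ} (hR : ∀ i j, HasDerivAt (fun τ => R τ i j) (R' i j) t)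
    (hRd : ∀ i j, HasDerivAt (fun τ => Rd τ i j) (Rd' i j) t) :
    HasDerivAt (fun τ => Psi (R τ) (Rd τ)) (-(1/2) * (Rd'ᵀ * R t + (Rd t)ᵀ * R').trace) t := by
  have h := ((hasDerivAt_trace_transpose_mul hRd hR).const_sub (3 : ℝ)).const_mul (1/2 : ℝ)
  have hPsi : (fun τ => Psi (R τ) (Rd τ)) = fun τ => 1/2 * (3 - ((Rd τ)ᵀ * R τ).trace) := by
    funext τ; simp [Psi, trace_sub]
  rw [hPsi]
  exact h.congr_deriv (by ring)

theorem psi_dot (R Rd : ℝ → Matrix (Fin 3) (Fin 3) ℝ)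
    (Ω Ωd : ℝ → Fin 3 → ℝ) (t : ℝ)
    (hSO : ∀ s, SO3 (R s)) (hSOd : ∀ s, SO3 (Rd s))
    (hR : ∀ s i j, HasDerivAt (fun τ => R τ i j) ((R s * hat (Ω s)) i j) s)
    (hRd : ∀ s i j, HasDerivAt (fun τ => Rd τ i j) ((Rd s * hat (Ωd s)) i j) s) :
    HasDerivAt (fun τ => Psi (R τ) (Rd τ))
      (dot (eR (R t) (Rd t)) (Ω t - ((R t)ᵀ * Rd t).mulVec (Ωd t))) t := by
  refine (hasDerivAt_Psi (hR t) (hRd t)).congr_deriv ?_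
  set Q := (Rd t)ᵀ * R t
  have hQ : SO3 Q := (hSOd t).transpose_mul (hSO t)
  have hQt : (R t)ᵀ * Rd t = Qᵀ := by rw [Matrix.transpose_mul, transpose_transpose]
  have hfix : Q *ᵥ eR (R t) (Rd t) = eR (R t) (Rd t) := by
    rw [eR_eq_smul_vee, mulVec_smul, hQ.mulVec_vee_sub_transpose]
  have htr : (Rd t * hat (Ωd t))ᵀ * R t + (Rd t)ᵀ * (R t * hat (Ω t))
      = -(hat (Ωd t) * Q) + Q * hat (Ω t) := by
    simp only [Matrix.transpose_mul, hat_transpose, Matrix.neg_mul, Matrix.mul_assoc, Q]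
  rw [htr, trace_add, trace_neg, trace_mul_comm (hat _), trace_mul_hat, trace_mul_hat,
    dot_eq_dotProduct, dotProduct_sub, hQt, dotProduct_mulVec, vecMul_transpose, hfix,
    eR_eq_smul_vee, smul_dotProduct, smul_dotProduct, smul_eq_mul, smul_eq_mul]
  ring
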